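/- Let Δ : H¹ → H¹ ⊗_ℚ H¹ be the ℚ-linear map defined by Δ(e_k) = ∑_{i=0}^{r} e_{(k₁,…,k_i)} ⊗ e_{(k_{i+1},…,k_r)} for every index k = (k₁,…,k_r). Equip H¹ ⊗_ℚ H¹ with the product (a⊗b)·(c⊗d) = (a*c)⊗(b*d). Then Δ is a ℚ-algebra homomorphism for the harmonic product: Δ(u * v) = Δ(u)·Δ(v) for all u, v ∈ H¹. -/
import Mathlib


/- STATEMENT 2: the deconcatenation coproduct Δ(e_k) = ∑_i e_{k_{[i]}} ⊗ e_{k^{[i]}} is a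
ℚ-algebra homomorphism for the harmonic product, H¹⊗H¹ carrying (a⊗b)(c⊗d)=(a*c)⊗(b*d). -/

noncomputable section

open TensorProduct

abbrev H : Type := FreeAlgebra ℚ (Fin 2)

def e0 : H := FreeAlgebra.ι ℚ 0
def e1 : H := FreeAlgebra.ι ℚ 1

/-- `e_{(m)} = e₁ e₀^{m-1}`. -/
def eE (m : ℕ+) : H := e1 * e0 ^ ((m : ℕ) - 1)

/-- `e_k` for an index `k`. -/
def eIdx : List ℕ+ → H
  | [] => 1
  | m :: ks => eE m * eIdx ks

/-- `H¹`, the span of the `e_k`. -/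
def H1 : Submodule ℚ H := Submodule.span ℚ (Set.range eIdx)

namespace Stmt2Aux

lemma eIdx_nil : eIdx [] = 1 := rfl

lemma eIdx_append (k : List ℕ+) (b : ℕ+) : eIdx (k ++ [b]) = eIdx k * eE b := by
  induction k with
  | nil => simp [eIdx]
  | cons m ks ih => simp [eIdx, ih, mul_assoc]

lemma mem_H1 (k : List ℕ+) : eIdx k ∈ H1 :=
  Submodule.subset_span ⟨k, rfl⟩

lemma H1_mul_eE {x : H} (hx : x ∈ H1) (b : ℕ+) : x * eE b ∈ H1 := by
  induction hx using Submodule.span_induction with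
  | mem y hy => obtain ⟨k, rfl⟩ := hy; rw [← eIdx_append]; exact mem_H1 _
  | zero => simp only [zero_mul]; exact H1.zero_mem
  | add y z _ _ hy hz => rw [add_mul]; exact H1.add_mem hy hz
  | smul a y _ hy => rw [smul_mul_assoc]; exact H1.smul_mem a hy

/-- right multiplication by `eE m` on the second tensor factor -/
def Da (m : ℕ+) : H ⊗[ℚ] H →ₗ[ℚ] H ⊗[ℚ] H :=
  LinearMap.lTensor H (LinearMap.mulRight ℚ (eE m))

lemma Da_tmul (m : ℕ+) (x y : H) : Da m (x ⊗ₜ[ℚ] y) = x ⊗ₜ[ℚ] (y * eE m) := rfl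

section

variable (mul : H →ₗ[ℚ] H →ₗ[ℚ] H)
variable (mulT : H ⊗[ℚ] H →ₗ[ℚ] H ⊗[ℚ] H →ₗ[ℚ] H ⊗[ℚ] H)
variable (Δ : H →ₗ[ℚ] H ⊗[ℚ] H)

lemma hΔ_concat
    (hΔ : ∀ k : List ℕ+,
      Δ (eIdx k) = ∑ i ∈ Finset.range (k.length + 1), (eIdx (k.take i)) ⊗ₜ[ℚ] (eIdx (k.drop i)))
    (k : List ℕ+) (b : ℕ+) :
    Δ (eIdx (k ++ [b])) = Da b (Δ (eIdx k)) + eIdx (k ++ [b]) ⊗ₜ[ℚ] (1 : H) := by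
  rw [hΔ (k ++ [b]), hΔ k]
  have hlen : (k ++ [b]).length + 1 = (k.length + 1) + 1 := by simp
  rw [hlen, Finset.sum_range_succ, map_sum]
  congr 1
  · apply Finset.sum_congr rfl
    intro i hi
    have hi' : i ≤ k.length := by simpa [Nat.lt_succ_iff] using hi
    rw [Da_tmul, List.take_append_of_le_length hi', List.drop_append_of_le_length hi',
      eIdx_append]
  · rw [List.take_of_length_le (by simp), List.drop_eq_nil_of_le (by simp)]
    rfl

lemma Δ_mul_eE
    (hΔ : ∀ k : List ℕ+,
      Δ (eIdx k) = ∑ i ∈ Finset.range (k.length + 1), (eIdx (k.take i)) ⊗ₜ[ℚ] (eIdx (k.drop i)))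
    {x : H} (hx : x ∈ H1) (b : ℕ+) :
    Δ (x * eE b) = Da b (Δ x) + (x * eE b) ⊗ₜ[ℚ] (1 : H) := by
  induction hx using Submodule.span_induction with
  | mem y hy =>
    obtain ⟨k, rfl⟩ := hy
    rw [← eIdx_append, hΔ_concat Δ hΔ k b, eIdx_append]
  | zero => simp
  | add y z _ _ hy hz =>
    rw [add_mul, map_add, hy, hz, map_add, map_add, TensorProduct.add_tmul]
    abel
  | smul a y _ hy =>
    rw [smul_mul_assoc, map_smul, hy, map_smul, map_smul, smul_add,
      TensorProduct.smul_tmul']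

variable
    (hOneL : ∀ l : List ℕ+, mul (eIdx []) (eIdx l) = eIdx l)
    (hOneR : ∀ k : List ℕ+, mul (eIdx k) (eIdx []) = eIdx k)
    (hRec : ∀ (k l : List ℕ+) (a b : ℕ+),
      mul (eIdx (k ++ [a])) (eIdx (l ++ [b])) =
        mul (eIdx (k ++ [a])) (eIdx l) * eE b
        + mul (eIdx k) (eIdx (l ++ [b])) * eE a
        - mul (eIdx k) (eIdx l) * eE (a + b))
    (hmulT : ∀ a b c d : H, mulT (a ⊗ₜ[ℚ] b) (c ⊗ₜ[ℚ] d) = (mul a c) ⊗ₜ[ℚ] (mul b d))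
    (hΔ : ∀ k : List ℕ+,
      Δ (eIdx k) = ∑ i ∈ Finset.range (k.length + 1), (eIdx (k.take i)) ⊗ₜ[ℚ] (eIdx (k.drop i)))

include hOneL hOneR hRec in
lemma mem_mul : ∀ (n : ℕ) (k l : List ℕ+), k.length + l.length ≤ n →
    mul (eIdx k) (eIdx l) ∈ H1 := by
  intro n
  induction n with
  | zero =>
    intro k l h
    have hk : k = [] := List.length_eq_zero_iff.mp (by omega)
    have hl : l = [] := List.length_eq_zero_iff.mp (by omega)
    subst hk; subst hl
    rw [hOneL]; exact mem_H1 _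
  | succ n ih =>
    intro k l h
    rcases k.eq_nil_or_concat' with rfl | ⟨k', a, rfl⟩
    · rw [hOneL]; exact mem_H1 _
    rcases l.eq_nil_or_concat' with rfl | ⟨l', b, rfl⟩
    · rw [hOneR]; exact mem_H1 _
    have h1 : (k' ++ [a]).length + l'.length ≤ n := by simp at h ⊢; omega
    have h2 : k'.length + (l' ++ [b]).length ≤ n := by simp at h ⊢; omega
    have h3 : k'.length + l'.length ≤ n := by simp at h ⊢; omega
    rw [hRec]
    refine H1.sub_mem (H1.add_mem ?_ ?_) ?_
    · exact H1_mul_eE (ih (k' ++ [a]) l' h1) b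
    · exact H1_mul_eE (ih k' (l' ++ [b]) h2) a
    · exact H1_mul_eE (ih k' l' h3) (a + b)

include hRec hmulT hΔ in
lemma mulT_DaDb (k l : List ℕ+) (a b : ℕ+) :
    mulT (Da a (Δ (eIdx k))) (Da b (Δ (eIdx l)))
      = Da b (mulT (Da a (Δ (eIdx k))) (Δ (eIdx l)))
      + Da a (mulT (Δ (eIdx k)) (Da b (Δ (eIdx l))))
      - Da (a + b) (mulT (Δ (eIdx k)) (Δ (eIdx l))) := by
  rw [hΔ k, hΔ l]
  simp only [map_sum, LinearMap.sum_apply, Da_tmul]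
  simp only [← eIdx_append]
  simp only [hmulT, hRec, TensorProduct.tmul_add, TensorProduct.tmul_sub, Da_tmul]
  simp only [Finset.sum_add_distrib, Finset.sum_sub_distrib]

include hOneR hmulT hΔ in
lemma mulT_Da_right (k : List ℕ+) (a : ℕ+) (l' : List ℕ+) :
    mulT (Da a (Δ (eIdx k))) (eIdx l' ⊗ₜ[ℚ] (1 : H))
      = Da a (mulT (Δ (eIdx k)) (eIdx l' ⊗ₜ[ℚ] (1 : H))) := by
  rw [hΔ k]
  rw [show (1 : H) = eIdx [] from rfl]
  simp only [map_sum, LinearMap.sum_apply, Da_tmul]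
  simp only [← eIdx_append]
  simp only [hmulT, hOneR, Da_tmul]
  simp only [eIdx_append]

include hOneL hmulT hΔ in
lemma mulT_Da_left (l : List ℕ+) (b : ℕ+) (k' : List ℕ+) :
    mulT (eIdx k' ⊗ₜ[ℚ] (1 : H)) (Da b (Δ (eIdx l)))
      = Da b (mulT (eIdx k' ⊗ₜ[ℚ] (1 : H)) (Δ (eIdx l))) := by
  rw [hΔ l]
  rw [show (1 : H) = eIdx [] from rfl]
  simp only [map_sum, LinearMap.sum_apply, Da_tmul]
  simp only [← eIdx_append]
  simp only [hmulT, hOneL, Da_tmul]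
  simp only [eIdx_append]

include hOneL hmulT hΔ in
lemma key_nil_left (l : List ℕ+) :
    Δ (mul (eIdx []) (eIdx l)) = mulT (Δ (eIdx [])) (Δ (eIdx l)) := by
  rw [hOneL l, hΔ [], hΔ l]
  simp [map_sum, LinearMap.sum_apply, hmulT, hOneL]

include hOneR hmulT hΔ in
lemma key_nil_right (k : List ℕ+) :
    Δ (mul (eIdx k) (eIdx [])) = mulT (Δ (eIdx k)) (Δ (eIdx [])) := by
  rw [hOneR k, hΔ [], hΔ k]
  simp [map_sum, LinearMap.sum_apply, hmulT, hOneR]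

include hOneL hOneR hRec hmulT hΔ in
lemma key : ∀ (n : ℕ) (k l : List ℕ+), k.length + l.length ≤ n →
    Δ (mul (eIdx k) (eIdx l)) = mulT (Δ (eIdx k)) (Δ (eIdx l)) := by
  intro n
  induction n with
  | zero =>
    intro k l h
    have hk : k = [] := List.length_eq_zero_iff.mp (by omega)
    subst hk
    exact key_nil_left mul mulT Δ hOneL hmulT hΔ l
  | succ n ih =>
    intro k l h
    rcases k.eq_nil_or_concat' with rfl | ⟨k', a, rfl⟩
    · exact key_nil_left mul mulT Δ hOneL hmulT hΔ l
    rcases l.eq_nil_or_concat' with rfl | ⟨l', b, rfl⟩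
    · exact key_nil_right mul mulT Δ hOneR hmulT hΔ _
    have h1 : (k' ++ [a]).length + l'.length ≤ n := by simp at h ⊢; omega
    have h2 : k'.length + (l' ++ [b]).length ≤ n := by simp at h ⊢; omega
    have h3 : k'.length + l'.length ≤ n := by simp at h ⊢; omega
    have m1 := mem_mul mul hOneL hOneR hRec n (k' ++ [a]) l' h1
    have m2 := mem_mul mul hOneL hOneR hRec n k' (l' ++ [b]) h2
    have m3 := mem_mul mul hOneL hOneR hRec n k' l' h3
    have h11 : (mul (1 : H)) (1 : H) = 1 := hOneL []
    rw [hRec, map_sub, map_add, Δ_mul_eE Δ hΔ m1 b, Δ_mul_eE Δ hΔ m2 a,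
      Δ_mul_eE Δ hΔ m3 (a + b), ih _ _ h1, ih _ _ h2, ih _ _ h3,
      hΔ_concat Δ hΔ k' a, hΔ_concat Δ hΔ l' b]
    simp only [map_add, LinearMap.add_apply]
    rw [mulT_DaDb mul mulT Δ hRec hmulT hΔ k' l' a b,
      mulT_Da_right mul mulT Δ hOneR hmulT hΔ k' a (l' ++ [b]),
      mulT_Da_left mul mulT Δ hOneL hmulT hΔ l' b (k' ++ [a]),
      hmulT, h11, hRec k' l' a b, TensorProduct.sub_tmul, TensorProduct.add_tmul]
    abel

end

end Stmt2Aux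

open Stmt2Aux in
theorem stmt_2
    (mul : H →ₗ[ℚ] H →ₗ[ℚ] H)
    (hOneL : ∀ l : List ℕ+, mul (eIdx []) (eIdx l) = eIdx l)
    (hOneR : ∀ k : List ℕ+, mul (eIdx k) (eIdx []) = eIdx k)
    (hRec : ∀ (k l : List ℕ+) (a b : ℕ+),
      mul (eIdx (k ++ [a])) (eIdx (l ++ [b])) =
        mul (eIdx (k ++ [a])) (eIdx l) * eE b
        + mul (eIdx k) (eIdx (l ++ [b])) * eE a
        - mul (eIdx k) (eIdx l) * eE (a + b))
    -- the product on H¹ ⊗ H¹ : (a⊗b)·(c⊗d) = (a*c)⊗(b*d)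
    (mulT : H ⊗[ℚ] H →ₗ[ℚ] H ⊗[ℚ] H →ₗ[ℚ] H ⊗[ℚ] H)
    (hmulT : ∀ a b c d : H, mulT (a ⊗ₜ[ℚ] b) (c ⊗ₜ[ℚ] d) = (mul a c) ⊗ₜ[ℚ] (mul b d))
    -- the deconcatenation coproduct
    (Δ : H →ₗ[ℚ] H ⊗[ℚ] H)
    (hΔ : ∀ k : List ℕ+,
      Δ (eIdx k) = ∑ i ∈ Finset.range (k.length + 1), (eIdx (k.take i)) ⊗ₜ[ℚ] (eIdx (k.drop i))) :
    ∀ u ∈ H1, ∀ v ∈ H1, Δ (mul u v) = mulT (Δ u) (Δ v) := by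
  have base : ∀ k l : List ℕ+, Δ (mul (eIdx k) (eIdx l)) = mulT (Δ (eIdx k)) (Δ (eIdx l)) :=
    fun k l => key mul mulT Δ hOneL hOneR hRec hmulT hΔ (k.length + l.length) k l le_rfl
  have step1 : ∀ k : List ℕ+, ∀ v ∈ H1, Δ (mul (eIdx k) v) = mulT (Δ (eIdx k)) (Δ v) := by
    intro k v hv
    induction hv using Submodule.span_induction with
    | mem y hy => obtain ⟨l, rfl⟩ := hy; exact base k l
    | zero => simp
    | add y z _ _ hy hz => rw [map_add, map_add, map_add, hy, hz, map_add]
    | smul a y _ hy => rw [map_smul, map_smul, map_smul, hy, map_smul]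
  intro u hu v hv
  induction hu using Submodule.span_induction with
  | mem y hy => obtain ⟨k, rfl⟩ := hy; exact step1 k v hv
  | zero => simp
  | add y z _ _ hy hz =>
    rw [map_add, LinearMap.add_apply, map_add, map_add, hy, hz, map_add, LinearMap.add_apply]
  | smul a y _ hy =>
    rw [map_smul, LinearMap.smul_apply, map_smul, map_smul, hy, map_smul,
      LinearMap.smul_apply]
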